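/- Let H = (1/√2)·!![1, 1; 1, −1] be the 2×2 Hadamard matrix over ℂ, M₁ = !![0, 0; 0, 1] the projection onto |1⟩, and ρ₀ = !![0, 0; 0, 1]. Define the map T on 2×2 complex matrices by T(ρ) = H (M₁ ρ M₁) H. Then both families k ↦ tr(T^k(ρ₀)) and k ↦ tr(M₁ T^k(ρ₀) M₁) of nonnegative reals are summable, and Σ_{k=0}^∞ tr(T^k(ρ₀)) + Σ_{k=0}^∞ tr(M₁ T^k(ρ₀) M₁) = 5. -/

import Mathlib

open Matrix

/-- The Hadamard gate. -/
noncomputable def Hgate : Matrix (Fin 2) (Fin 2) ℂ :=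
  (↑(Real.sqrt 2))⁻¹ • !![1, 1; 1, -1]

/-- The projection onto `|1⟩`. -/
noncomputable def Mone : Matrix (Fin 2) (Fin 2) ℂ := !![0, 0; 0, 1]

/-- The initial state `|1⟩⟨1|`. -/
noncomputable def rho0 : Matrix (Fin 2) (Fin 2) ℂ := !![0, 0; 0, 1]

/-- One iteration `T(ρ) = H (M₁ ρ M₁) H` of the quantum coin-tossing loop. -/
noncomputable def coinStep (ρ : Matrix (Fin 2) (Fin 2) ℂ) : Matrix (Fin 2) (Fin 2) ℂ :=
  Hgate * (Mone * ρ * Mone) * Hgate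

/-!
Since `M₁ H M₁ = -(1/√2) M₁`, one loop iteration halves the measured part of any state:
`M₁ T(ρ) M₁ = ½ M₁ ρ M₁`, so `tr(M₁ Tᵏ(ρ) M₁) = 2⁻ᵏ tr(M₁ ρ M₁)`. As `H² = 1`,
`tr T(ρ) = tr(M₁ ρ M₁)`, so the first series is the second one shifted by a step.
For `ρ₀` both initial traces are `1`, and the two geometric series give `(1 + 2) + 2 = 5`.
-/

lemma Hgate_mul_Hgate : Hgate * Hgate = 1 := by
  rw [Hgate, smul_mul_smul_comm, ← pow_two, inv_pow, Real.sq_sqrt zero_le_two]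
  ext i j
  fin_cases i <;> fin_cases j <;> norm_num [Matrix.mul_apply, Fin.sum_univ_two]

lemma Mone_mul_Mone : Mone * Mone = Mone := by
  ext i j
  fin_cases i <;> fin_cases j <;> simp [Mone, Matrix.mul_apply, Fin.sum_univ_two]

lemma Mone_mul_Hgate_mul_Mone : Mone * Hgate * Mone = -(Real.sqrt 2)⁻¹ • Mone := by
  ext i j
  fin_cases i <;> fin_cases j <;> simp [Mone, Hgate, Matrix.mul_apply, Fin.sum_univ_two]

lemma Mone_mul_coinStep_mul_Mone (ρ : Matrix (Fin 2) (Fin 2) ℂ) :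
    Mone * coinStep ρ * Mone = (2 : ℝ)⁻¹ • (Mone * ρ * Mone) := by
  calc Mone * coinStep ρ * Mone
      = (Mone * Hgate * Mone) * ρ * (Mone * Hgate * Mone) := by
        simp only [coinStep, Matrix.mul_assoc]
    _ = (2 : ℝ)⁻¹ • (Mone * ρ * Mone) := by
        rw [Mone_mul_Hgate_mul_Mone, Matrix.smul_mul, Matrix.smul_mul, Matrix.mul_smul, smul_smul,
          neg_mul_neg, ← mul_inv, Real.mul_self_sqrt zero_le_two, Matrix.mul_assoc]

lemma trace_coinStep (ρ : Matrix (Fin 2) (Fin 2) ℂ) :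
    (coinStep ρ).trace = (Mone * ρ * Mone).trace := by
  rw [coinStep, Matrix.trace_mul_cycle, Hgate_mul_Hgate, Matrix.one_mul]

lemma Mone_mul_iterate_coinStep_mul_Mone (ρ : Matrix (Fin 2) (Fin 2) ℂ) (k : ℕ) :
    Mone * coinStep^[k] ρ * Mone = (2 : ℝ)⁻¹ ^ k • (Mone * ρ * Mone) := by
  induction k with
  | zero => simp
  | succ k ih =>
    rw [Function.iterate_succ_apply', Mone_mul_coinStep_mul_Mone, ih, smul_smul, pow_succ']

lemma hasSum_trace_Mone_mul_iterate_coinStep_mul_Mone (ρ : Matrix (Fin 2) (Fin 2) ℂ) :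
    HasSum (fun k => (Mone * coinStep^[k] ρ * Mone).trace) ((2 : ℝ) • (Mone * ρ * Mone).trace) := by
  have hgeo : HasSum (fun k : ℕ => (2 : ℝ)⁻¹ ^ k) 2 := by
    simpa only [one_div] using hasSum_geometric_two
  simpa only [Mone_mul_iterate_coinStep_mul_Mone, Matrix.trace_smul]
    using hgeo.smul_const (Mone * ρ * Mone).trace

lemma hasSum_trace_iterate_coinStep (ρ : Matrix (Fin 2) (Fin 2) ℂ) :
    HasSum (fun k => (coinStep^[k] ρ).trace) (ρ.trace + (2 : ℝ) • (Mone * ρ * Mone).trace) := by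
  refine HasSum.zero_add ?_
  simpa only [Function.iterate_succ_apply', trace_coinStep]
    using hasSum_trace_Mone_mul_iterate_coinStep_mul_Mone ρ

lemma trace_rho0 : rho0.trace = 1 := by
  simp [rho0, Matrix.trace_fin_two]

lemma Mone_mul_rho0_mul_Mone : Mone * rho0 * Mone = rho0 := by
  rw [show rho0 = Mone from rfl, Mone_mul_Mone, Mone_mul_Mone]

/-- The expected runtime of the quantum coin-tossing program `Q_geo` started in `|1⟩` is
`5`: the expected number of measurements plus the expected number of Hadamard
applications. -/
theorem expected_runtime_qgeo :
    Summable (fun k : ℕ => ((coinStep^[k] rho0).trace).re) ∧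
    Summable (fun k : ℕ => ((Mone * (coinStep^[k] rho0) * Mone).trace).re) ∧
    (∑' k : ℕ, ((coinStep^[k] rho0).trace).re)
        + (∑' k : ℕ, ((Mone * (coinStep^[k] rho0) * Mone).trace).re) = 5 := by
  have hruns := Complex.hasSum_re (hasSum_trace_iterate_coinStep rho0)
  have hmeas := Complex.hasSum_re (hasSum_trace_Mone_mul_iterate_coinStep_mul_Mone rho0)
  rw [Mone_mul_rho0_mul_Mone, trace_rho0] at hruns hmeas
  refine ⟨hruns.summable, hmeas.summable, ?_⟩
  rw [hruns.tsum_eq, hmeas.tsum_eq]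
  norm_num
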